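/- Let p ∈ (0,1) and let L^1, …, L^n : ℝ^d → ℝ be convex functions that are all differentiable at a point w ∈ ℝ^d, and let f(w) = Q̄_p(L^1(w),…,L^n(w)). Let Q = Q_p(L^1(w),…,L^n(w)), I_> = {i : L^i(w) > Q}, I_= = {i : L^i(w) = Q}, and δ = (n − |I_>|)/n − p. If I_= is a singleton, then f is differentiable at w. Conversely, if δ > 0 and the gradients ∇L^i(w) for i ∈ I_= are not all equal, then f is not differentiable at w. -/

import Mathlib

open Finset MeasureTheory

/-- Empirical `p`-quantile of `u ∈ ℝⁿ`:
`Q_p(u) = inf {t : #{i : u i ≤ t} ≥ p·n}`. -/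
noncomputable def empQuantile {n : ℕ} (p : ℝ) (u : Fin n → ℝ) : ℝ :=
  sInf {t : ℝ | p * n ≤ ((Finset.univ.filter fun i => u i ≤ t).card : ℝ)}

/-- Empirical `p`-superquantile of `u ∈ ℝⁿ`:
`Q̄_p(u) = (1/(1-p)) ∫_p^1 Q_s(u) ds`. -/
noncomputable def supQuantile {n : ℕ} (p : ℝ) (u : Fin n → ℝ) : ℝ :=
  (1 - p)⁻¹ * ∫ s in p..1, empQuantile s u

/-!
Sorting `u` shows that `s ↦ Q_s(u)` is the step function equal to the `(k+1)`-th smallest entry on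
`(k/n, (k+1)/n]`, so integrating a function of it over `[0, 1]` averages that function over the
entries. With `q = Q_p(u)` this gives the Rockafellar–Uryasev formula
`(1 - p) Q̄_p(u) = (1 - p) q + (1/n) ∑ (u_i - q)₊`, and with it the dual representation:
`(1 - p) Q̄_p(u) ≥ ∑ a_i u_i` for all weights `0 ≤ a_i ≤ 1/n` of total mass `1 - p`, with equality
for weights that are `1/n` above `q` and `0` below `q`.

If only one index `i₀` attains `q` at `w`, the position of every `L^i` relative to `L^{i₀}` persists
near `w`, so `f` agrees near `w` with one fixed optimal combination of the `L^i`. If `δ > 0`, the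
ties carry positive mass, which can be shifted between two tied indices `i, j` without losing
optimality; every optimal combination touches `f` from below at `w`, so a derivative of `f` would
equal the derivative of both, forcing `∇L^i(w) = ∇L^j(w)`.
-/

open Filter Topology

section Counting

variable {n : ℕ}

lemma lt_card_filter_le_iff_of_monotone {v : Fin n → ℝ} (hv : Monotone v) (k : Fin n) (t : ℝ) :
    (k : ℕ) < #{j | v j ≤ t} ↔ v k ≤ t := by
  constructor
  · intro hk
    by_contra! hlt
    have hsub : ({j | v j ≤ t} : Finset (Fin n)) ⊆ Iio k := fun j hj => by
      simp only [mem_filter, mem_univ, true_and] at hj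
      exact mem_Iio.mpr (lt_of_not_ge fun hkj => (hlt.trans_le (hv hkj)).not_ge hj)
    have := card_le_card hsub
    rw [Fin.card_Iio] at this
    omega
  · intro hk
    have hsub : Iic k ⊆ ({j | v j ≤ t} : Finset (Fin n)) := fun j hj => by
      simpa using (hv (mem_Iic.mp hj)).trans hk
    have := card_le_card hsub
    rw [Fin.card_Iic] at this
    omega

lemma card_filter_lt_le_of_monotone {v : Fin n → ℝ} (hv : Monotone v) (k : Fin n) :
    #{j | v j < v k} ≤ k := by
  refine (card_le_card fun j hj => ?_).trans (Fin.card_Iio k).le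
  simp only [mem_filter, mem_univ, true_and] at hj
  exact mem_Iio.mpr (lt_of_not_ge fun hkj => (hv hkj).not_gt hj)

lemma card_filter_comp_sort (u : Fin n → ℝ) (P : ℝ → Prop) [DecidablePred P] :
    #{j | P (u (Tuple.sort u j))} = #{i | P (u i)} :=
  card_equiv (Tuple.sort u) (by simp)

end Counting

section Quantile

variable {n : ℕ} {s t : ℝ}

lemma le_card_filter_le_iff (u : Fin n → ℝ) {k : Fin n} (hs : s * n ∈ Set.Ioc (k : ℝ) (k + 1)) :
    s * n ≤ #{i | u i ≤ t} ↔ u (Tuple.sort u k) ≤ t := by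
  have hsort := lt_card_filter_le_iff_of_monotone (Tuple.monotone_sort u) k t
  simp only [Function.comp_apply] at hsort
  rw [← card_filter_comp_sort u (· ≤ t), ← hsort]
  constructor
  · intro h
    exact_mod_cast hs.1.trans_le h
  · intro h
    exact hs.2.trans (by exact_mod_cast h)

lemma empQuantile_eq_of_mem_Ioc (u : Fin n → ℝ) {k : Fin n}
    (hs : s * n ∈ Set.Ioc (k : ℝ) (k + 1)) : empQuantile s u = u (Tuple.sort u k) := by
  simp_rw [empQuantile, le_card_filter_le_iff u hs]
  exact csInf_Ici

lemma exists_mul_mem_Ioc (hn : 0 < n) (hs0 : 0 < s) (hs1 : s ≤ 1) :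
    ∃ k : Fin n, s * n ∈ Set.Ioc (k : ℝ) (k + 1) := by
  have hsn : 0 < s * n := by positivity
  refine ⟨⟨⌈s * n⌉₊ - 1, ?_⟩, ?_, ?_⟩
  · have : ⌈s * n⌉₊ ≤ n := Nat.ceil_le.mpr (mul_le_of_le_one_left n.cast_nonneg hs1)
    omega
  · have := Nat.ceil_pos.mpr hsn
    push_cast [Nat.one_le_iff_ne_zero.mpr this.ne']
    linarith [Nat.ceil_lt_add_one hsn.le]
  · have := Nat.ceil_pos.mpr hsn
    push_cast [Nat.one_le_iff_ne_zero.mpr this.ne']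
    linarith [Nat.le_ceil (s * n)]

lemma empQuantile_le_iff (u : Fin n → ℝ) (hn : 0 < n) (hs0 : 0 < s) (hs1 : s ≤ 1) :
    empQuantile s u ≤ t ↔ s * n ≤ #{i | u i ≤ t} := by
  obtain ⟨k, hk⟩ := exists_mul_mem_Ioc hn hs0 hs1
  rw [empQuantile_eq_of_mem_Ioc u hk, le_card_filter_le_iff u hk]

lemma card_filter_lt_empQuantile_lt (u : Fin n → ℝ) (hn : 0 < n) (hs0 : 0 < s) (hs1 : s ≤ 1) :
    #{i | u i < empQuantile s u} < s * n := by
  obtain ⟨k, hk⟩ := exists_mul_mem_Ioc hn hs0 hs1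
  rw [empQuantile_eq_of_mem_Ioc u hk, ← card_filter_comp_sort u (· < _)]
  exact lt_of_le_of_lt (by exact_mod_cast card_filter_lt_le_of_monotone (Tuple.monotone_sort u) k)
    hk.1

lemma empQuantile_eq_of_card (u : Fin n → ℝ) (hn : 0 < n) (hs0 : 0 < s) (hs1 : s ≤ 1)
    (hlt : #{i | u i < t} < s * n) (hle : s * n ≤ #{i | u i ≤ t}) : empQuantile s u = t := by
  refine le_antisymm ((empQuantile_le_iff u hn hs0 hs1).mpr hle) (le_of_not_gt fun hQt => ?_)
  have hsub : ({i | u i ≤ empQuantile s u} : Finset (Fin n)) ⊆ ({i | u i < t} : Finset (Fin n)) :=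
    monotone_filter_right _ fun _ _ h => h.trans_lt hQt
  have := (empQuantile_le_iff u hn hs0 hs1).mp le_rfl
  exact (this.trans (by exact_mod_cast card_le_card hsub)).not_gt hlt

lemma empQuantile_mono (u : Fin n → ℝ) (hn : 0 < n) {s' : ℝ} (hs0 : 0 < s) (hss' : s ≤ s')
    (hs'1 : s' ≤ 1) : empQuantile s u ≤ empQuantile s' u := by
  rw [empQuantile_le_iff u hn hs0 (hss'.trans hs'1)]
  exact (mul_le_mul_of_nonneg_right hss' n.cast_nonneg).trans
    ((empQuantile_le_iff u hn (hs0.trans_le hss') hs'1).mp le_rfl)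

lemma empQuantile_eq_of_forall_le {u u' : Fin n → ℝ} {t' : ℝ} (hn : 0 < n)
    (hs0 : 0 < s) (hs1 : s ≤ 1) (hle : ∀ i, u i ≤ empQuantile s u → u' i ≤ t')
    (hge : ∀ i, empQuantile s u ≤ u i → t' ≤ u' i) : empQuantile s u' = t' := by
  refine empQuantile_eq_of_card u' hn hs0 hs1 ?_ ?_
  · have hsub : ({i | u' i < t'} : Finset (Fin n)) ⊆ ({i | u i < empQuantile s u} : Finset _) :=
      monotone_filter_right _ fun i _ h => lt_of_not_ge fun h' => (hge i h').not_gt h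
    exact lt_of_le_of_lt (by exact_mod_cast card_le_card hsub)
      (card_filter_lt_empQuantile_lt u hn hs0 hs1)
  · have hsub : ({i | u i ≤ empQuantile s u} : Finset (Fin n)) ⊆ ({i | u' i ≤ t'} : Finset _) :=
      monotone_filter_right _ fun i _ h => hle i h
    exact ((empQuantile_le_iff u hn hs0 hs1).mp le_rfl).trans (by exact_mod_cast card_le_card hsub)

end Quantile

section Integral

variable {n : ℕ}

lemma integral_comp_empQuantile (u : Fin n → ℝ) (hn : 0 < n) (g : ℝ → ℝ) :
    IntervalIntegrable (fun s => g (empQuantile s u)) volume 0 1 ∧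
      ∫ s in 0..1, g (empQuantile s u) = (∑ i, g (u i)) / n := by
  have hn' : (0 : ℝ) < n := by exact_mod_cast hn
  set a : ℕ → ℝ := fun k => k / n
  have hle : ∀ k : ℕ, a k ≤ a (k + 1) := fun k => by simp only [a]; gcongr; simp
  have hpiece : ∀ k : Fin n, Set.EqOn (fun s => g (empQuantile s u))
      (fun _ => g (u (Tuple.sort u k))) (Set.uIoc (a k) (a (k + 1))) := by
    intro k s hs
    rw [Set.uIoc_of_le (hle k)] at hs
    have hsn : s * n ∈ Set.Ioc (k : ℝ) (k + 1) := by
      simp only [a, Set.mem_Ioc, div_lt_iff₀ hn', le_div_iff₀ hn'] at hs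
      push_cast at hs
      exact hs
    simp only [empQuantile_eq_of_mem_Ioc u hsn]
  have hint : ∀ k < n, IntervalIntegrable (fun s => g (empQuantile s u)) volume (a k) (a (k + 1)) :=
    fun k hk => (intervalIntegrable_congr (hpiece ⟨k, hk⟩)).mpr intervalIntegrable_const
  have ha0 : a 0 = 0 := by simp [a]
  have han : a n = 1 := div_self hn'.ne'
  refine ⟨ha0 ▸ han ▸ IntervalIntegrable.trans_iterate hint, ?_⟩
  rw [← ha0, ← han, ← intervalIntegral.sum_integral_adjacent_intervals hint, Finset.sum_range,
    ← Equiv.sum_comp (Tuple.sort u) (fun i => g (u i)), Finset.sum_div]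
  refine Finset.sum_congr rfl fun k _ => ?_
  rw [intervalIntegral.integral_congr_ae (Eventually.of_forall fun s hs => hpiece k hs),
    intervalIntegral.integral_const, smul_eq_mul]
  simp only [a]
  push_cast
  field_simp
  ring

/-- `(1 - p)` times the Rockafellar–Uryasev function of `u` at level `t`. -/
noncomputable def rockafellarUryasev (p : ℝ) (u : Fin n → ℝ) (t : ℝ) : ℝ :=
  (1 - p) * t + (∑ i, max (u i - t) 0) / n

lemma integral_empQuantile_eq_rockafellarUryasev (u : Fin n → ℝ) (hn : 0 < n) {p : ℝ}
    (hp0 : 0 < p) (hp1 : p ≤ 1) :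
    ∫ s in p..1, empQuantile s u = rockafellarUryasev p u (empQuantile p u) := by
  set q := empQuantile p u
  obtain ⟨hint, hval⟩ := integral_comp_empQuantile u hn (fun x => max (x - q) 0)
  have hp : p ∈ Set.uIcc 0 1 := Set.mem_uIcc_of_le hp0.le hp1
  have hintQ : IntervalIntegrable (fun s => empQuantile s u) volume p 1 :=
    (integral_comp_empQuantile u hn id).1.mono_set (Set.uIcc_subset_uIcc hp Set.right_mem_uIcc)
  have hbelow : ∫ s in 0..p, max (empQuantile s u - q) 0 = 0 := by
    rw [intervalIntegral.integral_congr_ae (g := fun _ => 0)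
      (Eventually.of_forall fun s hs => ?_), intervalIntegral.integral_zero]
    rw [Set.uIoc_of_le hp0.le] at hs
    exact max_eq_right (sub_nonpos.mpr (empQuantile_mono u hn hs.1 hs.2 hp1))
  have habove : ∫ s in p..1, max (empQuantile s u - q) 0 = ∫ s in p..1, empQuantile s u - q := by
    refine intervalIntegral.integral_congr fun s hs => ?_
    rw [Set.uIcc_of_le hp1] at hs
    exact max_eq_left (sub_nonneg.mpr (empQuantile_mono u hn hp0 hs.1 hs.2))
  rw [← intervalIntegral.integral_add_adjacent_intervals
    (hint.mono_set (Set.uIcc_subset_uIcc Set.left_mem_uIcc hp))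
    (hint.mono_set (Set.uIcc_subset_uIcc hp Set.right_mem_uIcc)), hbelow, habove,
    intervalIntegral.integral_sub hintQ intervalIntegrable_const,
    intervalIntegral.integral_const, smul_eq_mul] at hval
  rw [rockafellarUryasev, ← hval]
  ring

end Integral

section Weights

variable {n : ℕ} {p t : ℝ} {u a : Fin n → ℝ}

lemma rockafellarUryasev_sub_sum_mul (hsum : ∑ i, a i = 1 - p) :
    rockafellarUryasev p u t - ∑ i, a i * u i
      = ∑ i, ((n : ℝ)⁻¹ * max (u i - t) 0 - a i * (u i - t)) := by
  simp only [rockafellarUryasev, sum_sub_distrib, mul_sub, ← sum_mul, ← mul_sum, hsum]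
  ring

lemma sum_mul_le_rockafellarUryasev (ha : ∀ i, a i ∈ Set.Icc 0 (n : ℝ)⁻¹)
    (hsum : ∑ i, a i = 1 - p) (t : ℝ) : ∑ i, a i * u i ≤ rockafellarUryasev p u t := by
  refine sub_nonneg.mp ((rockafellarUryasev_sub_sum_mul hsum).symm ▸ sum_nonneg fun i _ => ?_)
  have : a i * (u i - t) ≤ a i * max (u i - t) 0 := by gcongr; exacts [(ha i).1, le_max_left _ _]
  have : a i * max (u i - t) 0 ≤ (n : ℝ)⁻¹ * max (u i - t) 0 := by gcongr; exacts [(ha i).2]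
  linarith

lemma sum_mul_eq_rockafellarUryasev (hsum : ∑ i, a i = 1 - p)
    (hgt : ∀ i, t < u i → a i = (n : ℝ)⁻¹) (hlt : ∀ i, u i < t → a i = 0) :
    ∑ i, a i * u i = rockafellarUryasev p u t := by
  refine (sub_eq_zero.mp ((rockafellarUryasev_sub_sum_mul hsum).trans
    (sum_eq_zero fun i _ => ?_))).symm
  rcases lt_trichotomy (u i) t with h | h | h
  · rw [hlt i h, max_eq_right (by linarith)]
    ring
  · simp [h]
  · rw [hgt i h, max_eq_left (by linarith)]
    ring

lemma sum_mul_le_supQuantile (hn : 0 < n) (hp0 : 0 < p) (hp1 : p ≤ 1)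
    (ha : ∀ i, a i ∈ Set.Icc 0 (n : ℝ)⁻¹) (hsum : ∑ i, a i = 1 - p) :
    (1 - p)⁻¹ * ∑ i, a i * u i ≤ supQuantile p u := by
  rw [supQuantile, integral_empQuantile_eq_rockafellarUryasev u hn hp0 hp1]
  gcongr
  exact sum_mul_le_rockafellarUryasev ha hsum _

lemma supQuantile_eq_sum_mul (hn : 0 < n) (hp0 : 0 < p) (hp1 : p ≤ 1)
    (hq : empQuantile p u = t) (hsum : ∑ i, a i = 1 - p)
    (hgt : ∀ i, t < u i → a i = (n : ℝ)⁻¹) (hlt : ∀ i, u i < t → a i = 0) :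
    supQuantile p u = (1 - p)⁻¹ * ∑ i, a i * u i := by
  rw [supQuantile, integral_empQuantile_eq_rockafellarUryasev u hn hp0 hp1, hq,
    sum_mul_eq_rockafellarUryasev hsum hgt hlt]

lemma card_filter_lt_add_card_filter_eq (u : Fin n → ℝ) (t : ℝ) :
    #{i | u i < t} + #{i | u i = t} = #{i | u i ≤ t} := by
  rw [← card_union_of_disjoint (disjoint_filter.mpr fun i _ h h' => h.ne h'), ← filter_or]
  simp_rw [← le_iff_lt_or_eq]

lemma card_filter_le_add_card_filter_lt (u : Fin n → ℝ) (t : ℝ) :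
    (#{i | u i ≤ t} : ℝ) + #{i | t < u i} = n := by
  simp_rw [← not_le]
  exact_mod_cast (card_filter_add_card_filter_not (s := univ) (fun i => u i ≤ t)).trans
    (by simp)

/-- The `δ` of the statement: the part of the mass `1 - p` left for the ties once each entry above
the quantile gets `1/n`. -/
noncomputable def tieMass (p : ℝ) (u : Fin n → ℝ) : ℝ :=
  ((n : ℝ) - #{i | empQuantile p u < u i}) / n - p

lemma tieMass_mem_Ico (u : Fin n → ℝ) (hn : 0 < n) (hp0 : 0 < p) (hp1 : p ≤ 1) :
    tieMass p u ∈ Set.Ico 0 ((#{i | u i = empQuantile p u} : ℝ) / n) := by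
  have hn' : (0 : ℝ) < n := by exact_mod_cast hn
  set q := empQuantile p u
  have hle := (empQuantile_le_iff u hn hp0 hp1).mp le_rfl
  have hlt := card_filter_lt_empQuantile_lt u hn hp0 hp1
  have hsplit : (#{i | u i < q} : ℝ) + #{i | u i = q} = #{i | u i ≤ q} := by
    exact_mod_cast card_filter_lt_add_card_filter_eq u q
  have htot := card_filter_le_add_card_filter_lt u q
  rw [tieMass]
  constructor
  · rw [sub_nonneg, le_div_iff₀ hn']
    linarith
  · rw [sub_lt_iff_lt_add, div_add' _ _ _ hn'.ne', div_lt_div_iff_of_pos_right hn']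
    linarith

noncomputable def quantileWeights (p : ℝ) (u : Fin n → ℝ) (i : Fin n) : ℝ :=
  if empQuantile p u < u i then (n : ℝ)⁻¹
  else if u i = empQuantile p u then tieMass p u / #{j | u j = empQuantile p u}
  else 0

lemma quantileWeights_of_lt {i : Fin n} (h : empQuantile p u < u i) :
    quantileWeights p u i = (n : ℝ)⁻¹ := if_pos h

lemma quantileWeights_of_gt {i : Fin n} (h : u i < empQuantile p u) :
    quantileWeights p u i = 0 := by
  rw [quantileWeights, if_neg h.not_gt, if_neg h.ne]

lemma quantileWeights_of_eq {i : Fin n} (h : u i = empQuantile p u) :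
    quantileWeights p u i = tieMass p u / #{j | u j = empQuantile p u} := by
  rw [quantileWeights, if_neg h.not_gt, if_pos h]

lemma card_filter_eq_empQuantile_pos (u : Fin n → ℝ) (hn : 0 < n) (hp0 : 0 < p) (hp1 : p ≤ 1) :
    (0 : ℝ) < #{i | u i = empQuantile p u} := by
  obtain ⟨hδ0, hδe⟩ := tieMass_mem_Ico u hn hp0 hp1
  exact (div_pos_iff_of_pos_right (by exact_mod_cast hn)).mp (hδ0.trans_lt hδe)

lemma quantileWeights_mem_Icc (hn : 0 < n) (hp0 : 0 < p) (hp1 : p ≤ 1) (i : Fin n) :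
    quantileWeights p u i ∈ Set.Icc 0 (n : ℝ)⁻¹ := by
  obtain ⟨hδ0, hδe⟩ := tieMass_mem_Ico u hn hp0 hp1
  rcases lt_trichotomy (u i) (empQuantile p u) with h | h | h
  · rw [quantileWeights_of_gt h]
    exact ⟨le_rfl, by positivity⟩
  · have he := card_filter_eq_empQuantile_pos u hn hp0 hp1
    rw [quantileWeights_of_eq h]
    refine ⟨div_nonneg hδ0 he.le, (div_le_iff₀ he).mpr ?_⟩
    rw [inv_mul_eq_div]
    exact hδe.le
  · rw [quantileWeights_of_lt h]
    exact ⟨by positivity, le_rfl⟩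

lemma sum_quantileWeights (hn : 0 < n) (hp0 : 0 < p) (hp1 : p ≤ 1) :
    ∑ i, quantileWeights p u i = 1 - p := by
  have he := (card_filter_eq_empQuantile_pos u hn hp0 hp1).ne'
  set q := empQuantile p u
  set τ := tieMass p u / #{j | u j = q}
  have hsplit : ∀ i, quantileWeights p u i
      = (if q < u i then (n : ℝ)⁻¹ else 0) + (if u i = q then τ else 0) := by
    intro i
    rcases lt_trichotomy (u i) q with h | h | h
    · simp [quantileWeights_of_gt h, h.not_gt, h.ne]
    · rw [quantileWeights_of_eq h, if_neg h.not_gt, if_pos h, zero_add]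
    · simp [quantileWeights_of_lt h, h, h.ne']
  simp only [hsplit, sum_add_distrib, ← sum_filter, sum_const, nsmul_eq_mul, τ, tieMass]
  field_simp
  ring

lemma quantileWeights_mem_Ioo_of_eq (hn : 0 < n) (hp0 : 0 < p) (hp1 : p ≤ 1) {i : Fin n}
    (h : u i = empQuantile p u) (hδ : 0 < tieMass p u) :
    quantileWeights p u i ∈ Set.Ioo 0 (n : ℝ)⁻¹ := by
  have he := card_filter_eq_empQuantile_pos u hn hp0 hp1
  rw [quantileWeights_of_eq h]
  refine ⟨div_pos hδ he, (div_lt_iff₀ he).mpr ?_⟩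
  rw [inv_mul_eq_div]
  exact (tieMass_mem_Ico u hn hp0 hp1).2

/-- Feasible weights attaining the maximum in the dual representation
`(1 - p) Q̄_p(u) = max_a ∑ i, a i * u i`. -/
def IsOptimalWeight (p : ℝ) (u a : Fin n → ℝ) : Prop :=
  (∀ i, a i ∈ Set.Icc 0 (n : ℝ)⁻¹) ∧ ∑ i, a i = 1 - p ∧
    (∀ i, empQuantile p u < u i → a i = (n : ℝ)⁻¹) ∧ (∀ i, u i < empQuantile p u → a i = 0)

lemma isOptimalWeight_quantileWeights (hn : 0 < n) (hp0 : 0 < p) (hp1 : p ≤ 1) :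
    IsOptimalWeight p u (quantileWeights p u) :=
  ⟨quantileWeights_mem_Icc hn hp0 hp1, sum_quantileWeights hn hp0 hp1,
    fun _ => quantileWeights_of_lt, fun _ => quantileWeights_of_gt⟩

lemma IsOptimalWeight.shift (ha : IsOptimalWeight p u a) {i j : Fin n} (hne : i ≠ j)
    (hi : u i = empQuantile p u) (hj : u j = empQuantile p u) {c : ℝ} (hc : 0 ≤ c)
    (hci : a i + c ≤ (n : ℝ)⁻¹) (hcj : c ≤ a j) :
    IsOptimalWeight p u fun k => a k + (if k = i then c else 0) - (if k = j then c else 0) := by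
  obtain ⟨hmem, hsum, hgt, hlt⟩ := ha
  refine ⟨fun k => ?_, by simp [sum_add_distrib, sum_sub_distrib, hsum], fun k hk => ?_,
    fun k hk => ?_⟩
  · by_cases hki : k = i
    · subst hki
      simp only [if_true, if_neg hne, sub_zero]
      constructor <;> linarith [(hmem k).1, (hmem k).2]
    · by_cases hkj : k = j
      · subst hkj
        simp only [if_true, if_neg hki, add_zero]
        constructor <;> linarith [(hmem k).1, (hmem k).2]
      · simpa [hki, hkj] using hmem k
  · have hki : k ≠ i := by rintro rfl; exact hk.ne' hi
    have hkj : k ≠ j := by rintro rfl; exact hk.ne' hj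
    simp [hki, hkj, hgt k hk]
  · have hki : k ≠ i := by rintro rfl; exact hk.ne hi
    have hkj : k ≠ j := by rintro rfl; exact hk.ne hj
    simp [hki, hkj, hlt k hk]

end Weights

lemma fderiv_eq_of_eventuallyLE_of_eq {E : Type*} [NormedAddCommGroup E] [NormedSpace ℝ E]
    {f g : E → ℝ} {g' : E →L[ℝ] ℝ} {x : E} (hf : DifferentiableAt ℝ f x)
    (hg : HasFDerivAt g g' x) (hle : g ≤ᶠ[𝓝 x] f) (heq : g x = f x) : fderiv ℝ f x = g' := by
  have hmin : IsLocalMin (f - g) x := by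
    filter_upwards [hle] with y hy
    simp only [Pi.sub_apply, heq, sub_self]
    linarith
  exact sub_eq_zero.mp (hmin.hasFDerivAt_eq_zero (hf.hasFDerivAt.sub hg))

section Composition

variable {n : ℕ} {p : ℝ} {E : Type*} [NormedAddCommGroup E] [NormedSpace ℝ E]
  {L : Fin n → E → ℝ} {w : E}

lemma fderiv_supQuantile_comp_eq (hn : 0 < n) (hp0 : 0 < p) (hp1 : p ≤ 1)
    (hdiff : ∀ i, DifferentiableAt ℝ (L i) w)
    (hf : DifferentiableAt ℝ (fun w' => supQuantile p fun i => L i w') w) {a : Fin n → ℝ}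
    (ha : IsOptimalWeight p (fun k => L k w) a) :
    fderiv ℝ (fun w' => supQuantile p fun i => L i w') w
      = (1 - p)⁻¹ • ∑ i, a i • fderiv ℝ (L i) w :=
  fderiv_eq_of_eventuallyLE_of_eq hf
    ((HasFDerivAt.fun_sum fun i _ => (hdiff i).hasFDerivAt.const_mul (a i)).const_mul _)
    (Eventually.of_forall fun _ => sum_mul_le_supQuantile hn hp0 hp1 ha.1 ha.2.1)
    (supQuantile_eq_sum_mul hn hp0 hp1 rfl ha.2.1 ha.2.2.1 ha.2.2.2).symm

theorem differentiableAt_supQuantile_comp (hn : 0 < n) (hp0 : 0 < p) (hp1 : p ≤ 1)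
    (hdiff : ∀ i, DifferentiableAt ℝ (L i) w)
    (htie : #{i | L i w = empQuantile p fun k => L k w} = 1) :
    DifferentiableAt ℝ (fun w' => supQuantile p fun i => L i w') w := by
  set u := fun k => L k w
  set q := empQuantile p u
  obtain ⟨i₀, hi₀⟩ := card_eq_one.mp htie
  have hq : L i₀ w = q := by simpa using hi₀.symm.subset (mem_singleton_self i₀)
  have hnear : ∀ᶠ w' in 𝓝 w, ∀ i,
      (u i ≤ q → L i w' ≤ L i₀ w') ∧ (q ≤ u i → L i₀ w' ≤ L i w') := by
    refine eventually_all.mpr fun i => ?_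
    rcases lt_trichotomy (u i) q with h | h | h
    · filter_upwards [(hdiff i).continuousAt.eventually_lt (hdiff i₀).continuousAt
        (hq ▸ h)] with w' hw'
      exact ⟨fun _ => hw'.le, fun h' => absurd h' h.not_ge⟩
    · obtain rfl : i = i₀ := by simpa [hi₀] using (mem_filter.mpr ⟨mem_univ i, h⟩ :
        i ∈ ({i | L i w = q} : Finset (Fin n)))
      exact Eventually.of_forall fun _ => ⟨fun _ => le_rfl, fun _ => le_rfl⟩
    · filter_upwards [(hdiff i₀).continuousAt.eventually_lt (hdiff i).continuousAt
        (hq ▸ h)] with w' hw'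
      exact ⟨fun h' => absurd h' h.not_ge, fun _ => hw'.le⟩
  have hloc : (fun w' => supQuantile p fun i => L i w')
      =ᶠ[𝓝 w] fun w' => (1 - p)⁻¹ * ∑ i, quantileWeights p u i * L i w' := by
    filter_upwards [hnear] with w' hw'
    refine supQuantile_eq_sum_mul hn hp0 hp1
      (empQuantile_eq_of_forall_le hn hp0 hp1 (fun i => (hw' i).1) (fun i => (hw' i).2))
      (sum_quantileWeights hn hp0 hp1) (fun i hi => quantileWeights_of_lt ?_)
      (fun i hi => quantileWeights_of_gt ?_)
    · exact lt_of_not_ge fun h => ((hw' i).1 h).not_gt hi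
    · exact lt_of_not_ge fun h => ((hw' i).2 h).not_gt hi
  exact hloc.differentiableAt_iff.mpr (by fun_prop)

theorem not_differentiableAt_supQuantile_comp (hn : 0 < n) (hp0 : 0 < p) (hp1 : p < 1)
    (hdiff : ∀ i, DifferentiableAt ℝ (L i) w) {i j : Fin n}
    (hi : L i w = empQuantile p fun k => L k w) (hj : L j w = empQuantile p fun k => L k w)
    (hij : fderiv ℝ (L i) w ≠ fderiv ℝ (L j) w)
    (hδ : 0 < tieMass p fun k => L k w) :
    ¬ DifferentiableAt ℝ (fun w' => supQuantile p fun k => L k w') w := by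
  intro hf
  set u := fun k => L k w
  have ha := isOptimalWeight_quantileWeights (u := u) hn hp0 hp1.le
  have hai := quantileWeights_mem_Ioo_of_eq hn hp0 hp1.le hi hδ
  have haj : quantileWeights p u j = quantileWeights p u i := by
    rw [quantileWeights_of_eq (u := u) hi, quantileWeights_of_eq (u := u) hj]
  have hne : i ≠ j := by
    rintro rfl
    exact hij rfl
  obtain ⟨c, hc, hci, hcj⟩ : ∃ c : ℝ, 0 < c ∧ quantileWeights p u i + c ≤ (n : ℝ)⁻¹ ∧
      c ≤ quantileWeights p u j :=
    ⟨min _ _, lt_min hai.1 (sub_pos.mpr hai.2), le_sub_iff_add_le'.mp (min_le_right _ _),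
      haj ▸ min_le_left _ _⟩
  have hD := (fderiv_supQuantile_comp_eq hn hp0 hp1.le hdiff hf ha).symm.trans
    (fderiv_supQuantile_comp_eq hn hp0 hp1.le hdiff hf (ha.shift hne hi hj hc.le hci hcj))
  have hshift : ∑ k, (quantileWeights p u k + (if k = i then c else 0) - (if k = j then c else 0))
        • fderiv ℝ (L k) w
      = ∑ k, quantileWeights p u k • fderiv ℝ (L k) w
        + c • (fderiv ℝ (L i) w - fderiv ℝ (L j) w) := by
    simp [add_smul, sub_smul, ite_smul, sum_add_distrib, sum_sub_distrib, smul_sub, add_sub_assoc]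
  rw [hshift, smul_right_injective _ (inv_ne_zero (sub_ne_zero.mpr hp1.ne')) |>.eq_iff,
    left_eq_add, smul_eq_zero, sub_eq_zero] at hD
  exact hij (hD.resolve_left hc.ne')

end Composition

theorem stmt6_general {n d : ℕ} (hn : 1 ≤ n) (p : ℝ) (hp0 : 0 < p) (hp1 : p < 1)
    (L : Fin n → EuclideanSpace ℝ (Fin d) → ℝ)
    (w : EuclideanSpace ℝ (Fin d)) (hdiff : ∀ i, DifferentiableAt ℝ (L i) w) :
    let Q := empQuantile p (fun i => L i w)
    let Igt := Finset.univ.filter fun i => Q < L i w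
    let Ieq := Finset.univ.filter fun i => L i w = Q
    let δ : ℝ := ((n : ℝ) - (Igt.card : ℝ)) / n - p
    let f := fun w' => supQuantile p (fun i => L i w')
    (Ieq.card = 1 → DifferentiableAt ℝ f w) ∧
    (0 < δ → ¬ (∀ i ∈ Ieq, ∀ j ∈ Ieq, gradient (L i) w = gradient (L j) w) →
      ¬ DifferentiableAt ℝ f w) := by
  intro Q Igt Ieq δ f
  refine ⟨differentiableAt_supQuantile_comp hn hp0 hp1.le hdiff, fun hδ hgrad => ?_⟩
  push Not at hgrad
  obtain ⟨i, hi, j, hj, hij⟩ := hgrad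
  exact not_differentiableAt_supQuantile_comp hn hp0 hp1 hdiff (mem_filter.mp hi).2
    (mem_filter.mp hj).2 (fun h => hij (by simp only [gradient, h])) hδ

/-- Differentiability of the superquantile objective: if `I_=` is a singleton
then `f(w) = Q̄_p(L(w))` is differentiable at `w`; conversely if `δ > 0` and the
gradients `∇L^i(w)`, `i ∈ I_=`, are not all equal, then `f` is not
differentiable at `w`. -/
theorem stmt6 {n d : ℕ} (hn : 1 ≤ n) (p : ℝ) (hp0 : 0 < p) (hp1 : p < 1)
    (L : Fin n → EuclideanSpace ℝ (Fin d) → ℝ) (hL : ∀ i, ConvexOn ℝ Set.univ (L i))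
    (w : EuclideanSpace ℝ (Fin d)) (hdiff : ∀ i, DifferentiableAt ℝ (L i) w) :
    let Q := empQuantile p (fun i => L i w)
    let Igt := Finset.univ.filter fun i => Q < L i w
    let Ieq := Finset.univ.filter fun i => L i w = Q
    let δ : ℝ := ((n : ℝ) - (Igt.card : ℝ)) / n - p
    let f := fun w' => supQuantile p (fun i => L i w')
    (Ieq.card = 1 → DifferentiableAt ℝ f w) ∧
    (0 < δ → ¬ (∀ i ∈ Ieq, ∀ j ∈ Ieq, gradient (L i) w = gradient (L j) w) →
      ¬ DifferentiableAt ℝ f w) :=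
  stmt6_general hn p hp0 hp1 L w hdiff
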